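/- arXiv:2502.20568 — 3 statements merged into one kernel-verified Lean document; each statement's English description precedes it below -/
import Mathlib

section
/- Optimality criterion in Dantzig-Wolfe column generation for bounded subproblems: let (λ*, θ*) be optimal for the restricted master with dual values ν_s for the linking constraints and r_s for the convexity constraints. If for every s the pricing subproblem SP_s has a finite optimal value that is at least r_s, then (λ*, θ*) is optimal for the full master problem containing all extreme points and rays. -/
open Matrix
open scoped BigOperators

/-- **Optimality criterion in Dantzig–Wolfe column generation (bounded pricing).**
Let `(lamstar, thstar)` be optimal for the restricted master, with dual values `ν s`
for the linking constraints and `r s` for the convexity constraints (strong duality at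
the restricted optimum: the primal objective equals `Σ_s r s`). If for every `s` the
pricing subproblem over `Xs s` has a finite optimal value that is at least `r s`
(all reduced costs nonnegative), then `(lamstar, thstar)` is optimal for the full
master problem containing all extreme points `pt` and extreme rays `ry`.
`s0` plays the role of subperiod 1. -/
theorem dw_optimality_criterion {k : ℕ} {S ι κ : Type*}
    [Fintype S] [Fintype ι] [Fintype κ] [DecidableEq S] (s0 : S)
    (Xs : S → Set ((Fin k → ℝ) × ℝ))
    (φ : S → ((Fin k → ℝ) × ℝ) →ₗ[ℝ] ℝ)
    (pt : S → ι → (Fin k → ℝ) × ℝ) (ry : S → κ → (Fin k → ℝ) × ℝ)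
    (hpt : ∀ s j, pt s j ∈ Xs s)
    (hry : ∀ s j, ∀ u ∈ Xs s, ∀ t : ℝ, 0 ≤ t → u + t • ry s j ∈ Xs s)
    (hne : ∀ s, (Xs s).Nonempty)
    (lamstar : S → ι → ℝ) (thstar : S → κ → ℝ)
    (hlam : ∀ s j, 0 ≤ lamstar s j) (hth : ∀ s j, 0 ≤ thstar s j)
    (hsum : ∀ s, ∑ j, lamstar s j = 1)
    (hnac : ∀ s, (∑ j, lamstar s j • pt s j + ∑ j, thstar s j • ry s j).1
        = (∑ j, lamstar s0 j • pt s0 j + ∑ j, thstar s0 j • ry s0 j).1)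
    (ν : S → Fin k → ℝ) (r : S → ℝ)
    (hstrong : ∑ s, (∑ j, lamstar s j * φ s (pt s j) + ∑ j, thstar s j * φ s (ry s j))
        = ∑ s, r s)
    (hpricing : ∀ s, ∀ u ∈ Xs s, r s ≤ φ s u +
        (if s = s0 then -(∑ t ∈ Finset.univ.erase s0, ν t ⬝ᵥ u.1) else ν s ⬝ᵥ u.1)) :
    ∀ (lam : S → ι → ℝ) (th : S → κ → ℝ),
      (∀ s j, 0 ≤ lam s j) → (∀ s j, 0 ≤ th s j) →
      (∀ s, ∑ j, lam s j = 1) →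
      (∀ s, (∑ j, lam s j • pt s j + ∑ j, th s j • ry s j).1
          = (∑ j, lam s0 j • pt s0 j + ∑ j, th s0 j • ry s0 j).1) →
      ∑ s, (∑ j, lamstar s j * φ s (pt s j) + ∑ j, thstar s j * φ s (ry s j)) ≤
        ∑ s, (∑ j, lam s j * φ s (pt s j) + ∑ j, th s j * φ s (ry s j)) := by
  intro lam th hlam' hth' hsum' hnac'
  classical
  set d : S → Fin k → ℝ := fun s =>
    if s = s0 then -(∑ t ∈ Finset.univ.erase s0, ν t) else ν s with hd
  -- the linear map giving the reduced cost
  set L : S → ((Fin k → ℝ) × ℝ) →ₗ[ℝ] ℝ := fun s =>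
    φ s + { toFun := fun u => d s ⬝ᵥ u.1,
            map_add' := fun u v => by simp [dotProduct_add]
            map_smul' := fun t u => by simp [dotProduct_smul] } with hL
  have hLval : ∀ s u, L s u = φ s u + d s ⬝ᵥ u.1 := fun s u => rfl
  have hif : ∀ s (u : (Fin k → ℝ) × ℝ),
      (if s = s0 then -(∑ t ∈ Finset.univ.erase s0, ν t ⬝ᵥ u.1) else ν s ⬝ᵥ u.1)
        = d s ⬝ᵥ u.1 := by
    intro s u
    by_cases h : s = s0 <;> simp only [hd, h, if_true, if_false, neg_dotProduct, neg_inj]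
    · simp only [dotProduct, Finset.sum_apply, Finset.sum_mul]
      exact Finset.sum_comm
  have hLX : ∀ s, ∀ u ∈ Xs s, r s ≤ L s u := by
    intro s u hu
    have := hpricing s u hu
    rwa [hif s u] at this
  -- rays have nonnegative reduced cost
  have hLry : ∀ s j, 0 ≤ L s (ry s j) := by
    intro s j
    by_contra hneg
    push_neg at hneg
    obtain ⟨u, hu⟩ := hne s
    set c := L s (ry s j) with hc
    have hru : r s ≤ L s u := hLX s u hu
    have ht0 : (0:ℝ) ≤ (L s u - r s + 1) / (-c) := by
      apply div_nonneg <;> linarith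
    have hmem := hry s j u hu _ ht0
    have h2 := hLX s _ hmem
    rw [map_add, LinearMap.map_smul] at h2
    have hcne : c ≠ 0 := by linarith
    have : ((L s u - r s + 1) / (-c)) • c = -(L s u - r s + 1) := by
      rw [smul_eq_mul, div_mul_eq_mul_div, div_neg, mul_div_assoc, div_self hcne, mul_one]
    rw [smul_eq_mul] at this h2
    rw [this] at h2
    linarith
  set y : S → (Fin k → ℝ) × ℝ := fun s =>
    ∑ j, lam s j • pt s j + ∑ j, th s j • ry s j with hy
  have hobj : ∀ s, (∑ j, lam s j * φ s (pt s j) + ∑ j, th s j * φ s (ry s j))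
      = φ s (y s) := by
    intro s
    simp [hy, map_add, map_sum, LinearMap.map_smul, smul_eq_mul]
  have hLy : ∀ s, r s ≤ L s (y s) := by
    intro s
    have h1 : L s (y s) = ∑ j, lam s j * L s (pt s j) + ∑ j, th s j * L s (ry s j) := by
      simp [hy, map_add, map_sum, LinearMap.map_smul, smul_eq_mul]
    rw [h1]
    have h2 : ∑ j, lam s j * r s ≤ ∑ j, lam s j * L s (pt s j) :=
      Finset.sum_le_sum fun j _ =>
        mul_le_mul_of_nonneg_left (hLX s _ (hpt s j)) (hlam' s j)
    have h3 : (0:ℝ) ≤ ∑ j, th s j * L s (ry s j) :=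
      Finset.sum_nonneg fun j _ => mul_nonneg (hth' s j) (hLry s j)
    have h4 : ∑ j, lam s j * r s = r s := by
      rw [← Finset.sum_mul, hsum' s, one_mul]
    linarith
  have hzero : ∑ s, d s ⬝ᵥ (y s).1 = 0 := by
    have h1 : ∑ s, d s ⬝ᵥ (y s).1 = ∑ s, d s ⬝ᵥ (y s0).1 :=
      Finset.sum_congr rfl fun s _ => by rw [hnac' s]
    have h2 : (∑ s, d s) = 0 := by
      rw [← Finset.add_sum_erase _ d (Finset.mem_univ s0)]
      have : ∀ s ∈ Finset.univ.erase s0, d s = ν s := by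
        intro s hs
        simp [hd, Finset.ne_of_mem_erase hs]
      rw [Finset.sum_congr rfl this]
      simp [hd]
    have h3 : ∑ s, d s ⬝ᵥ (y s0).1 = (∑ s, d s) ⬝ᵥ (y s0).1 := by
      simp only [dotProduct, Finset.sum_apply, Finset.sum_mul]
      exact Finset.sum_comm
    rw [h1, h3, h2, zero_dotProduct]
  calc ∑ s, (∑ j, lamstar s j * φ s (pt s j) + ∑ j, thstar s j * φ s (ry s j))
      = ∑ s, r s := hstrong
    _ ≤ ∑ s, L s (y s) := Finset.sum_le_sum fun s _ => hLy s
    _ = ∑ s, (φ s (y s) + d s ⬝ᵥ (y s).1) := Finset.sum_congr rfl fun s _ => hLval s _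
    _ = ∑ s, φ s (y s) + ∑ s, d s ⬝ᵥ (y s).1 := Finset.sum_add_distrib
    _ = ∑ s, φ s (y s) := by rw [hzero, add_zero]
    _ = ∑ s, (∑ j, lam s j * φ s (pt s j) + ∑ j, th s j * φ s (ry s j)) :=
        Finset.sum_congr rfl fun s _ => (hobj s).symm
end

section
/- Every point of a nonempty polyhedron P = {u : M u ≤ d} containing no line can be written as a convex combination of the extreme points of P plus a conic (nonnegative) combination of the extreme rays of P. -/
open Matrix
open scoped BigOperators

/-- A recession direction of a set `P`. -/
def IsRecessionDir {n : ℕ} (P : Set (Fin n → ℝ)) (v : Fin n → ℝ) : Prop :=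
  ∀ w ∈ P, ∀ t : ℝ, 0 ≤ t → w + t • v ∈ P

/-- An extreme ray of (the recession cone of) a set `P`. -/
def IsExtremeRay {n : ℕ} (P : Set (Fin n → ℝ)) (v : Fin n → ℝ) : Prop :=
  v ≠ 0 ∧ IsRecessionDir P v ∧
    ∀ v₁ v₂ : Fin n → ℝ, IsRecessionDir P v₁ → IsRecessionDir P v₂ → v = v₁ + v₂ →
      ∃ c₁ c₂ : ℝ, 0 ≤ c₁ ∧ 0 ≤ c₂ ∧ v₁ = c₁ • v ∧ v₂ = c₂ • v

variable {n m : ℕ}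




/-- Subspace of directions vanishing on all constraints tight at `u`. -/
def Fsp (M : Matrix (Fin m) (Fin n) ℝ) (d : Fin m → ℝ) (u : Fin n → ℝ) :
    Submodule ℝ (Fin n → ℝ) where
  carrier := {x | ∀ j, (M *ᵥ u) j = d j → (M *ᵥ x) j = 0}
  add_mem' := by
    intro a b ha hb j hj
    rw [Matrix.mulVec_add]
    simp [ha j hj, hb j hj]
  zero_mem' := by intro j hj; simp [Matrix.mulVec_zero]
  smul_mem' := by
    intro c x hx j hj
    rw [Matrix.mulVec_smul]
    simp [hx j hj]

lemma mem_Fsp {M : Matrix (Fin m) (Fin n) ℝ} {d u x : Fin n → ℝ → ℝ} : True := trivial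

lemma extremePoint_of_Fsp_bot (M : Matrix (Fin m) (Fin n) ℝ) (d : Fin m → ℝ)
    {u : Fin n → ℝ} (hu : M *ᵥ u ≤ d) (hbot : Fsp M d u = ⊥) :
    u ∈ Set.extremePoints ℝ {u | M *ᵥ u ≤ d} := by
  rw [mem_extremePoints]
  refine ⟨hu, ?_⟩
  intro x₁ hx₁ x₂ hx₂ hseg
  rw [openSegment] at hseg
  obtain ⟨a, b, ha, hb, hab, hx⟩ := hseg
  have key : ∀ x', x' ∈ ({u | M *ᵥ u ≤ d} : Set _) → (∀ j, (M *ᵥ u) j = d j → (M *ᵥ x') j = d j) →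
      x' = u := by
    intro x' _ htight
    have : x' - u ∈ Fsp M d u := by
      intro j hj
      rw [Matrix.mulVec_sub]
      simp [htight j hj, hj]
    rw [hbot, Submodule.mem_bot, sub_eq_zero] at this
    exact this
  have tight : ∀ j, (M *ᵥ u) j = d j → (M *ᵥ x₁) j = d j ∧ (M *ᵥ x₂) j = d j := by
    intro j hj
    have h1 : (M *ᵥ x₁) j ≤ d j := hx₁ j
    have h2 : (M *ᵥ x₂) j ≤ d j := hx₂ j
    have heq : a * (M *ᵥ x₁) j + b * (M *ᵥ x₂) j = d j := by
      have : M *ᵥ (a • x₁ + b • x₂) = a • (M *ᵥ x₁) + b • (M *ᵥ x₂) := by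
        rw [Matrix.mulVec_add, Matrix.mulVec_smul, Matrix.mulVec_smul]
      rw [hx] at this
      have h := congrFun this j
      simp only [Pi.add_apply, Pi.smul_apply, smul_eq_mul, hj] at h
      linarith [h.symm]
    have habd : a * d j + b * d j = d j := by
      have := congrArg (· * d j) hab
      simpa [add_mul] using this
    constructor
    · by_contra hne
      have hlt : (M *ᵥ x₁) j < d j := lt_of_le_of_ne h1 hne
      have := mul_lt_mul_of_pos_left hlt ha
      have := mul_le_mul_of_nonneg_left h2 hb.le
      linarith
    · by_contra hne
      have hlt : (M *ᵥ x₂) j < d j := lt_of_le_of_ne h2 hne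
      have := mul_lt_mul_of_pos_left hlt hb
      have := mul_le_mul_of_nonneg_left h1 ha.le
      linarith
  constructor
  · exact key x₁ hx₁ fun j hj => (tight j hj).1
  · exact key x₂ hx₂ fun j hj => (tight j hj).2


lemma mem_Fsp_iff {M : Matrix (Fin m) (Fin n) ℝ} {d : Fin m → ℝ} {u x : Fin n → ℝ} :
    x ∈ Fsp M d u ↔ ∀ j, (M *ᵥ u) j = d j → (M *ᵥ x) j = 0 := Iff.rfl

lemma push_lemma (M : Matrix (Fin m) (Fin n) ℝ) (d : Fin m → ℝ)
    {u w : Fin n → ℝ} (hu : M *ᵥ u ≤ d) (hw : w ∈ Fsp M d u)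
    (hJ : ∃ j, 0 < (M *ᵥ w) j) :
    ∃ t : ℝ, 0 < t ∧ M *ᵥ (u + t • w) ≤ d ∧ Fsp M d (u + t • w) < Fsp M d u := by
  classical
  set J : Finset (Fin m) := Finset.univ.filter (fun j => 0 < (M *ᵥ w) j) with hJdef
  have hJne : J.Nonempty := by
    obtain ⟨j, hj⟩ := hJ
    exact ⟨j, by simp [hJdef, hj]⟩
  obtain ⟨j₀, hj₀mem, hmin⟩ :=
    Finset.exists_min_image J (fun j => (d j - (M *ᵥ u) j) / (M *ᵥ w) j) hJne
  have hj₀pos : 0 < (M *ᵥ w) j₀ := by simpa [hJdef] using hj₀mem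
  have hnontight : ∀ j ∈ J, (M *ᵥ u) j < d j := by
    intro j hj
    have hjpos : 0 < (M *ᵥ w) j := by simpa [hJdef] using hj
    rcases lt_or_eq_of_le (hu j) with h | h
    · exact h
    · exact absurd (hw j h) (ne_of_gt hjpos)
  set t : ℝ := (d j₀ - (M *ᵥ u) j₀) / (M *ᵥ w) j₀ with ht
  have htpos : 0 < t := div_pos (by linarith [hnontight j₀ hj₀mem]) hj₀pos
  have hval : ∀ j, (M *ᵥ (u + t • w)) j = (M *ᵥ u) j + t * (M *ᵥ w) j := by
    intro j
    rw [Matrix.mulVec_add, Matrix.mulVec_smul]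
    simp
  have hmem : M *ᵥ (u + t • w) ≤ d := by
    intro j
    rw [hval j]
    rcases le_or_gt ((M *ᵥ w) j) 0 with h | h
    · have : t * (M *ᵥ w) j ≤ 0 := mul_nonpos_of_nonneg_of_nonpos htpos.le h
      linarith [hu j]
    · have hjJ : j ∈ J := by simp [hJdef, h]
      have := hmin j hjJ
      have h2 : t * (M *ᵥ w) j ≤ d j - (M *ᵥ u) j := by
        rw [ht]
        calc (d j₀ - (M *ᵥ u) j₀) / (M *ᵥ w) j₀ * (M *ᵥ w) j
            ≤ (d j - (M *ᵥ u) j) / (M *ᵥ w) j * (M *ᵥ w) j := by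
              exact mul_le_mul_of_nonneg_right this h.le
          _ = d j - (M *ᵥ u) j := div_mul_cancel₀ _ (ne_of_gt h)
      linarith
  have htight₀ : (M *ᵥ (u + t • w)) j₀ = d j₀ := by
    rw [hval j₀, ht, div_mul_cancel₀ _ (ne_of_gt hj₀pos)]
    ring
  have htight : ∀ j, (M *ᵥ u) j = d j → (M *ᵥ (u + t • w)) j = d j := by
    intro j hj
    rw [hval j, hw j hj]
    simpa using hj
  refine ⟨t, htpos, hmem, ?_⟩
  have hle : Fsp M d (u + t • w) ≤ Fsp M d u := by
    intro x hx j hj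
    exact hx j (htight j hj)
  refine lt_of_le_of_ne hle ?_
  intro heq
  have hw' : w ∈ Fsp M d (u + t • w) := heq.symm ▸ hw
  exact absurd (hw' j₀ htight₀) (ne_of_gt hj₀pos)


lemma append_decomp {E : Set (Fin n → ℝ)} {N₁ N₂ : ℕ}
    (pt₁ : Fin N₁ → Fin n → ℝ) (pt₂ : Fin N₂ → Fin n → ℝ)
    (a₁ : Fin N₁ → ℝ) (a₂ : Fin N₂ → ℝ) (c : ℝ) (hc0 : 0 ≤ c) (hc1 : c ≤ 1)
    (hpt₁ : ∀ i, pt₁ i ∈ E) (hpt₂ : ∀ i, pt₂ i ∈ E)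
    (ha₁ : ∀ i, 0 ≤ a₁ i) (ha₂ : ∀ i, 0 ≤ a₂ i)
    (hs₁ : (∑ i, a₁ i) = 1) (hs₂ : (∑ i, a₂ i) = 1) :
    ∃ (N : ℕ) (pt : Fin N → Fin n → ℝ) (a : Fin N → ℝ),
      (∀ i, pt i ∈ E) ∧ (∀ i, 0 ≤ a i) ∧ (∑ i, a i) = 1 ∧
      (∑ i, a i • pt i) = c • (∑ i, a₁ i • pt₁ i) + (1 - c) • (∑ i, a₂ i • pt₂ i) := by
  refine ⟨N₁ + N₂, Fin.append pt₁ pt₂, Fin.append (c • a₁) ((1 - c) • a₂), ?_, ?_, ?_, ?_⟩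
  · intro i
    refine Fin.addCases (fun i => ?_) (fun i => ?_) i
    · rw [Fin.append_left]; exact hpt₁ i
    · rw [Fin.append_right]; exact hpt₂ i
  · intro i
    refine Fin.addCases (fun i => ?_) (fun i => ?_) i
    · rw [Fin.append_left]; exact mul_nonneg hc0 (ha₁ i)
    · rw [Fin.append_right]; exact mul_nonneg (by linarith) (ha₂ i)
  · rw [Fin.sum_univ_add]
    simp only [Fin.append_left, Fin.append_right, Pi.smul_apply, smul_eq_mul]
    rw [← Finset.mul_sum, ← Finset.mul_sum, hs₁, hs₂]
    ring
  · rw [Fin.sum_univ_add]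
    simp only [Fin.append_left, Fin.append_right, Pi.smul_apply, smul_eq_mul]
    rw [Finset.smul_sum, Finset.smul_sum]
    congr 1 <;> exact Finset.sum_congr rfl fun i _ => (smul_smul _ _ _).symm

lemma step1 (M : Matrix (Fin m) (Fin n) ℝ) (d : Fin m → ℝ)
    (hline : ¬ ∃ (u v : Fin n → ℝ), v ≠ 0 ∧ ∀ t : ℝ, M *ᵥ (u + t • v) ≤ d) :
    ∀ (k : ℕ) (u : Fin n → ℝ), M *ᵥ u ≤ d → Module.finrank ℝ (Fsp M d u) ≤ k →
    ∃ (N : ℕ) (pt : Fin N → Fin n → ℝ) (a : Fin N → ℝ) (r : Fin n → ℝ),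
      (∀ i, pt i ∈ Set.extremePoints ℝ {u | M *ᵥ u ≤ d}) ∧ (∀ i, 0 ≤ a i) ∧
      (∑ i, a i) = 1 ∧ M *ᵥ r ≤ 0 ∧ u = ∑ i, a i • pt i + r := by
  intro k
  induction k with
  | zero =>
    intro u hu hrk
    have hbot : Fsp M d u = ⊥ := by
      rw [← Submodule.finrank_eq_zero (R := ℝ) (S := Fsp M d u)]
      omega
    refine ⟨1, fun _ => u, fun _ => 1, 0, ?_, ?_, ?_, ?_, ?_⟩
    · intro _; exact extremePoint_of_Fsp_bot M d hu hbot
    · intro _; norm_num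
    · simp
    · simp [Matrix.mulVec_zero]
    · simp
  | succ k ih =>
    intro u hu hrk
    by_cases hbot : Fsp M d u = ⊥
    · refine ⟨1, fun _ => u, fun _ => 1, 0, ?_, ?_, ?_, ?_, ?_⟩
      · intro _; exact extremePoint_of_Fsp_bot M d hu hbot
      · intro _; norm_num
      · simp
      · simp [Matrix.mulVec_zero]
      · simp
    · obtain ⟨w, hwmem, hw0⟩ := Submodule.exists_mem_ne_zero_of_ne_bot hbot
      have hwneg : -w ∈ Fsp M d u := neg_mem hwmem
      by_cases hp : ∃ j, 0 < (M *ᵥ w) j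
      · by_cases hm : ∃ j, 0 < (M *ᵥ (-w)) j
        · -- both directions bounded
          obtain ⟨t₁, ht₁, hu₁, hF₁⟩ := push_lemma M d hu hwmem hp
          obtain ⟨t₂, ht₂, hu₂, hF₂⟩ := push_lemma M d hu hwneg hm
          have hr₁ : Module.finrank ℝ (Fsp M d (u + t₁ • w)) ≤ k :=
            Nat.lt_succ_iff.mp (lt_of_lt_of_le (Submodule.finrank_lt_finrank_of_lt hF₁) hrk)
          have hr₂ : Module.finrank ℝ (Fsp M d (u + t₂ • (-w))) ≤ k :=
            Nat.lt_succ_iff.mp (lt_of_lt_of_le (Submodule.finrank_lt_finrank_of_lt hF₂) hrk)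
          obtain ⟨N₁, pt₁, a₁, r₁, hept₁, ha₁, hs₁, hr₁le, hdec₁⟩ := ih _ hu₁ hr₁
          obtain ⟨N₂, pt₂, a₂, r₂, hept₂, ha₂, hs₂, hr₂le, hdec₂⟩ := ih _ hu₂ hr₂
          set c : ℝ := t₂ / (t₁ + t₂) with hc
          have htsum : 0 < t₁ + t₂ := by linarith
          have hc0 : 0 ≤ c := div_nonneg ht₂.le htsum.le
          have hc1 : c ≤ 1 := by
            rw [hc, div_le_one htsum]; linarith
          obtain ⟨N, pt, a, hept, ha, hs, hsum⟩ :=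
            append_decomp pt₁ pt₂ a₁ a₂ c hc0 hc1 hept₁ hept₂ ha₁ ha₂ hs₁ hs₂
          refine ⟨N, pt, a, c • r₁ + (1 - c) • r₂, hept, ha, hs, ?_, ?_⟩
          · intro j
            have h1 := hr₁le j
            have h2 := hr₂le j
            have : (M *ᵥ (c • r₁ + (1 - c) • r₂)) j = c * (M *ᵥ r₁) j + (1-c) * (M *ᵥ r₂) j := by
              rw [Matrix.mulVec_add, Matrix.mulVec_smul, Matrix.mulVec_smul]; simp
            rw [this]
            simp only [Pi.zero_apply] at h1 h2 ⊢
            nlinarith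
          · have hkey : c • (u + t₁ • w) + (1 - c) • (u + t₂ • (-w))
                = u + (c * t₁ - (1 - c) * t₂) • w := by module
            have hco : c * t₁ - (1 - c) * t₂ = 0 := by
              rw [hc]; field_simp; ring
            rw [hco, zero_smul, add_zero] at hkey
            calc u = c • (u + t₁ • w) + (1 - c) • (u + t₂ • (-w)) := hkey.symm
              _ = c • (∑ i, a₁ i • pt₁ i + r₁) + (1 - c) • (∑ i, a₂ i • pt₂ i + r₂) := by
                  rw [← hdec₁, ← hdec₂]
              _ = (c • (∑ i, a₁ i • pt₁ i) + (1 - c) • (∑ i, a₂ i • pt₂ i))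
                    + (c • r₁ + (1 - c) • r₂) := by module
              _ = ∑ i, a i • pt i + (c • r₁ + (1 - c) • r₂) := by rw [hsum]
        · -- -w is a recession direction
          push_neg at hm
          have hmle : M *ᵥ (-w) ≤ 0 := fun j => hm j
          obtain ⟨t₁, ht₁, hu₁, hF₁⟩ := push_lemma M d hu hwmem hp
          have hr₁ : Module.finrank ℝ (Fsp M d (u + t₁ • w)) ≤ k :=
            Nat.lt_succ_iff.mp (lt_of_lt_of_le (Submodule.finrank_lt_finrank_of_lt hF₁) hrk)
          obtain ⟨N₁, pt₁, a₁, r₁, hept₁, ha₁, hs₁, hr₁le, hdec₁⟩ := ih _ hu₁ hr₁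
          refine ⟨N₁, pt₁, a₁, r₁ + t₁ • (-w), hept₁, ha₁, hs₁, ?_, ?_⟩
          · intro j
            have : (M *ᵥ (r₁ + t₁ • (-w))) j = (M *ᵥ r₁) j + t₁ * (M *ᵥ (-w)) j := by
              rw [Matrix.mulVec_add, Matrix.mulVec_smul]; simp
            rw [this]
            have := hr₁le j
            have := hmle j
            simp only [Pi.zero_apply] at *
            nlinarith
          · have : u = (u + t₁ • w) + t₁ • (-w) := by module
            rw [this, hdec₁]
            module
      · push_neg at hp
        have hple : M *ᵥ w ≤ 0 := fun j => hp j
        by_cases hm : ∃ j, 0 < (M *ᵥ (-w)) j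
        · obtain ⟨t₂, ht₂, hu₂, hF₂⟩ := push_lemma M d hu hwneg hm
          have hr₂ : Module.finrank ℝ (Fsp M d (u + t₂ • (-w))) ≤ k :=
            Nat.lt_succ_iff.mp (lt_of_lt_of_le (Submodule.finrank_lt_finrank_of_lt hF₂) hrk)
          obtain ⟨N₂, pt₂, a₂, r₂, hept₂, ha₂, hs₂, hr₂le, hdec₂⟩ := ih _ hu₂ hr₂
          refine ⟨N₂, pt₂, a₂, r₂ + t₂ • w, hept₂, ha₂, hs₂, ?_, ?_⟩
          · intro j
            have : (M *ᵥ (r₂ + t₂ • w)) j = (M *ᵥ r₂) j + t₂ * (M *ᵥ w) j := by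
              rw [Matrix.mulVec_add, Matrix.mulVec_smul]; simp
            rw [this]
            have := hr₂le j
            have := hple j
            simp only [Pi.zero_apply] at *
            nlinarith
          · have : u = (u + t₂ • (-w)) + t₂ • w := by module
            rw [this, hdec₂]
            module
        · -- line: contradiction
          exfalso
          push_neg at hm
          apply hline
          refine ⟨u, w, hw0, ?_⟩
          intro t j
          have hz : (M *ᵥ w) j = 0 := by
            have h1 := hp j
            have h2 := hm j
            rw [Matrix.mulVec_neg] at h2
            simp only [Pi.neg_apply] at h2
            linarith
          have : (M *ᵥ (u + t • w)) j = (M *ᵥ u) j + t * (M *ᵥ w) j := by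
            rw [Matrix.mulVec_add, Matrix.mulVec_smul]; simp
          rw [this, hz]
          simpa using hu j



def cvec (M : Matrix (Fin m) (Fin n) ℝ) : Fin n → ℝ := fun i => -∑ j, M j i

lemma cvec_dot (M : Matrix (Fin m) (Fin n) ℝ) (x : Fin n → ℝ) :
    cvec M ⬝ᵥ x = -∑ j, (M *ᵥ x) j := by
  simp only [cvec, Matrix.mulVec, dotProduct, neg_mul, Finset.sum_mul,
    Finset.sum_neg_distrib]
  rw [Finset.sum_comm]

lemma mulVec_eval (M : Matrix (Fin m) (Fin n) ℝ) (u : Fin n → ℝ) (t : ℝ) (w : Fin n → ℝ)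
    (j : Fin m) : (M *ᵥ (u + t • w)) j = (M *ᵥ u) j + t * (M *ᵥ w) j := by
  rw [Matrix.mulVec_add, Matrix.mulVec_smul]; simp

/-- For a nonempty line-free polyhedron, `cvec` is positive on nonzero recession vectors. -/
lemma cvec_pos (M : Matrix (Fin m) (Fin n) ℝ) (d : Fin m → ℝ)
    (hne : ∃ u₀, M *ᵥ u₀ ≤ d)
    (hline : ¬ ∃ (u v : Fin n → ℝ), v ≠ 0 ∧ ∀ t : ℝ, M *ᵥ (u + t • v) ≤ d)
    {r : Fin n → ℝ} (hr : M *ᵥ r ≤ 0) (hr0 : r ≠ 0) : 0 < cvec M ⬝ᵥ r := by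
  rw [cvec_dot]
  have hsum : ∑ j, (M *ᵥ r) j ≤ 0 :=
    Finset.sum_nonpos fun j _ => hr j
  rcases lt_or_eq_of_le hsum with h | h
  · linarith
  · exfalso
    have hzero : ∀ j, (M *ᵥ r) j = 0 := by
      intro j
      have := (Finset.sum_eq_zero_iff_of_nonpos (fun j _ => hr j)).mp h
      exact this j (Finset.mem_univ j)
    obtain ⟨u₀, hu₀⟩ := hne
    exact hline ⟨u₀, r, hr0, fun t j => by rw [mulVec_eval, hzero]; simpa using hu₀ j⟩


def Mq (M : Matrix (Fin m) (Fin n) ℝ) : Matrix (Fin (m + 1 + 1)) (Fin n) ℝ :=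
  Matrix.of (Fin.snoc (Fin.snoc (fun j => M j) (cvec M)) (-(cvec M)))

def dq (m : ℕ) : Fin (m + 1 + 1) → ℝ := Fin.snoc (Fin.snoc (0 : Fin m → ℝ) 1) (-1)

lemma Mq_eq (M : Matrix (Fin m) (Fin n) ℝ) :
    Mq M = Fin.snoc (Fin.snoc (fun j => M j) (cvec M)) (-(cvec M)) := rfl

lemma Mq_mulVec_castSucc (M : Matrix (Fin m) (Fin n) ℝ) (x : Fin n → ℝ) (i : Fin m) :
    (Mq M *ᵥ x) (i.castSucc.castSucc) = (M *ᵥ x) i := by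
  show Mq M (i.castSucc.castSucc) ⬝ᵥ x = M i ⬝ᵥ x
  congr 1
  rw [Mq_eq, Fin.snoc_castSucc, Fin.snoc_castSucc]

lemma Mq_mulVec_c (M : Matrix (Fin m) (Fin n) ℝ) (x : Fin n → ℝ) :
    (Mq M *ᵥ x) ((Fin.last m).castSucc) = cvec M ⬝ᵥ x := by
  show Mq M ((Fin.last m).castSucc) ⬝ᵥ x = cvec M ⬝ᵥ x
  congr 1
  rw [Mq_eq, Fin.snoc_castSucc, Fin.snoc_last]

lemma Mq_mulVec_negc (M : Matrix (Fin m) (Fin n) ℝ) (x : Fin n → ℝ) :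
    (Mq M *ᵥ x) (Fin.last (m + 1)) = -(cvec M ⬝ᵥ x) := by
  show Mq M (Fin.last (m + 1)) ⬝ᵥ x = -(cvec M ⬝ᵥ x)
  have h : Mq M (Fin.last (m + 1)) = -(cvec M) := by
    rw [Mq_eq, Fin.snoc_last]
  rw [h, neg_dotProduct]

lemma dq_castSucc (i : Fin m) : dq m (i.castSucc.castSucc) = 0 := by
  simp [dq, Fin.snoc_castSucc]

lemma dq_c : dq m ((Fin.last m).castSucc) = 1 := by
  simp [dq, Fin.snoc_castSucc, Fin.snoc_last]

lemma dq_negc : dq m (Fin.last (m + 1)) = -1 := by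
  simp [dq, Fin.snoc_last]

lemma mem_Q_iff (M : Matrix (Fin m) (Fin n) ℝ) (x : Fin n → ℝ) :
    Mq M *ᵥ x ≤ dq m ↔ (M *ᵥ x ≤ 0 ∧ cvec M ⬝ᵥ x = 1) := by
  constructor
  · intro h
    refine ⟨fun i => ?_, ?_⟩
    · have := h (i.castSucc.castSucc)
      rw [Mq_mulVec_castSucc, dq_castSucc] at this
      simpa using this
    · have h1 := h ((Fin.last m).castSucc)
      have h2 := h (Fin.last (m + 1))
      rw [Mq_mulVec_c, dq_c] at h1
      rw [Mq_mulVec_negc, dq_negc] at h2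
      linarith
  · intro ⟨h1, h2⟩ j
    refine Fin.lastCases ?_ (fun i => ?_) j
    · rw [Mq_mulVec_negc, dq_negc, h2]
    · refine Fin.lastCases ?_ (fun i' => ?_) i
      · rw [Mq_mulVec_c, dq_c, h2]
      · rw [Mq_mulVec_castSucc, dq_castSucc]
        simpa using h1 i'

lemma mulVec_eval' (M : Matrix (Fin m) (Fin n) ℝ) (u : Fin n → ℝ) (t : ℝ) (w : Fin n → ℝ)
    (j : Fin m) : (M *ᵥ (u + t • w)) j = (M *ᵥ u) j + t * (M *ᵥ w) j := by
  rw [Matrix.mulVec_add, Matrix.mulVec_smul]; simp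

lemma recession_iff (M : Matrix (Fin m) (Fin n) ℝ) (d : Fin m → ℝ)
    (hne : ∃ u₀, M *ᵥ u₀ ≤ d) (v : Fin n → ℝ) :
    IsRecessionDir {u | M *ᵥ u ≤ d} v ↔ M *ᵥ v ≤ 0 := by
  constructor
  · intro h j
    obtain ⟨u₀, hu₀⟩ := hne
    by_contra hc
    push_neg at hc
    simp only [Pi.zero_apply] at hc
    set t : ℝ := (d j - (M *ᵥ u₀) j + 1) / (M *ᵥ v) j with ht
    have htnn : 0 ≤ t := div_nonneg (by linarith [hu₀ j]) hc.le
    have := h u₀ hu₀ t htnn j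
    rw [mulVec_eval', ht, div_mul_cancel₀ _ (ne_of_gt hc)] at this
    linarith
  · intro h w hw t htnn j
    rw [mulVec_eval']
    have h1 := h j
    simp only [Pi.zero_apply] at h1
    nlinarith [hw j]

lemma extremeRay_of_Q (M : Matrix (Fin m) (Fin n) ℝ) (d : Fin m → ℝ)
    (hne : ∃ u₀, M *ᵥ u₀ ≤ d)
    (hline : ¬ ∃ (u v : Fin n → ℝ), v ≠ 0 ∧ ∀ t : ℝ, M *ᵥ (u + t • v) ≤ d)
    {p : Fin n → ℝ} (hp : p ∈ Set.extremePoints ℝ {x | Mq M *ᵥ x ≤ dq m}) :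
    IsExtremeRay {u | M *ᵥ u ≤ d} p := by
  rw [mem_extremePoints] at hp
  obtain ⟨hpQ, hpext⟩ := hp
  rw [Set.mem_setOf_eq, mem_Q_iff] at hpQ
  obtain ⟨hpK, hpc⟩ := hpQ
  refine ⟨?_, (recession_iff M d hne p).mpr hpK, ?_⟩
  · intro h0
    rw [h0] at hpc
    simp at hpc
  · intro v₁ v₂ h₁ h₂ hsum
    have k₁ : M *ᵥ v₁ ≤ 0 := (recession_iff M d hne v₁).mp h₁
    have k₂ : M *ᵥ v₂ ≤ 0 := (recession_iff M d hne v₂).mp h₂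
    set α := cvec M ⬝ᵥ v₁ with hα
    set β := cvec M ⬝ᵥ v₂ with hβ
    have hαβ : α + β = 1 := by
      rw [hα, hβ, ← dotProduct_add, ← hsum, hpc]
    by_cases hv₁ : v₁ = 0
    · refine ⟨0, 1, le_refl 0, zero_le_one, by simp [hv₁], ?_⟩
      rw [one_smul, hsum, hv₁, zero_add]
    by_cases hv₂ : v₂ = 0
    · refine ⟨1, 0, zero_le_one, le_refl 0, ?_, by simp [hv₂]⟩
      rw [one_smul, hsum, hv₂, add_zero]
    have hαpos : 0 < α := cvec_pos M d hne hline k₁ hv₁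
    have hβpos : 0 < β := cvec_pos M d hne hline k₂ hv₂
    set p₁ := α⁻¹ • v₁ with hp₁
    set p₂ := β⁻¹ • v₂ with hp₂
    have hp₁Q : p₁ ∈ ({x | Mq M *ᵥ x ≤ dq m} : Set _) := by
      rw [Set.mem_setOf_eq, mem_Q_iff]
      constructor
      · intro j
        rw [hp₁, Matrix.mulVec_smul]
        have := k₁ j
        simp only [Pi.smul_apply, Pi.zero_apply, smul_eq_mul] at *
        exact mul_nonpos_of_nonneg_of_nonpos (inv_nonneg.mpr hαpos.le) this
      · rw [hp₁, dotProduct_smul, ← hα, smul_eq_mul, inv_mul_cancel₀ (ne_of_gt hαpos)]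
    have hp₂Q : p₂ ∈ ({x | Mq M *ᵥ x ≤ dq m} : Set _) := by
      rw [Set.mem_setOf_eq, mem_Q_iff]
      constructor
      · intro j
        rw [hp₂, Matrix.mulVec_smul]
        have := k₂ j
        simp only [Pi.smul_apply, Pi.zero_apply, smul_eq_mul] at *
        exact mul_nonpos_of_nonneg_of_nonpos (inv_nonneg.mpr hβpos.le) this
      · rw [hp₂, dotProduct_smul, ← hβ, smul_eq_mul, inv_mul_cancel₀ (ne_of_gt hβpos)]
    have hseg : p ∈ openSegment ℝ p₁ p₂ := by
      rw [openSegment]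
      refine ⟨α, β, hαpos, hβpos, hαβ, ?_⟩
      rw [hp₁, hp₂, smul_inv_smul₀ (ne_of_gt hαpos), smul_inv_smul₀ (ne_of_gt hβpos), hsum]
    obtain ⟨he₁, he₂⟩ := hpext _ hp₁Q _ hp₂Q hseg
    refine ⟨α, β, hαpos.le, hβpos.le, ?_, ?_⟩
    · rw [← he₁, hp₁, smul_inv_smul₀ (ne_of_gt hαpos)]
    · rw [← he₂, hp₂, smul_inv_smul₀ (ne_of_gt hβpos)]

lemma Qline (M : Matrix (Fin m) (Fin n) ℝ) (d : Fin m → ℝ)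
    (hne : ∃ u₀, M *ᵥ u₀ ≤ d)
    (hline : ¬ ∃ (u v : Fin n → ℝ), v ≠ 0 ∧ ∀ t : ℝ, M *ᵥ (u + t • v) ≤ d) :
    ¬ ∃ (x z : Fin n → ℝ), z ≠ 0 ∧ ∀ t : ℝ, Mq M *ᵥ (x + t • z) ≤ dq m := by
  rintro ⟨x, z, hz, h⟩
  have hMz : ∀ j, (M *ᵥ z) j = 0 := by
    intro j
    by_contra hc
    have h1 := ((mem_Q_iff M _).mp (h ((1 - (M *ᵥ x) j) / (M *ᵥ z) j))).1 j
    rw [mulVec_eval', div_mul_cancel₀ _ hc] at h1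
    simp only [Pi.zero_apply] at h1
    linarith
  obtain ⟨u₀, hu₀⟩ := hne
  refine hline ⟨u₀, z, hz, fun t j => ?_⟩
  rw [mulVec_eval', hMz]
  simpa using hu₀ j

lemma step2 (M : Matrix (Fin m) (Fin n) ℝ) (d : Fin m → ℝ)
    (hne : ∃ u₀, M *ᵥ u₀ ≤ d)
    (hline : ¬ ∃ (u v : Fin n → ℝ), v ≠ 0 ∧ ∀ t : ℝ, M *ᵥ (u + t • v) ≤ d)
    {r : Fin n → ℝ} (hr : M *ᵥ r ≤ 0) :
    ∃ (N : ℕ) (ray : Fin N → Fin n → ℝ) (b : Fin N → ℝ),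
      (∀ i, IsExtremeRay {u | M *ᵥ u ≤ d} (ray i)) ∧ (∀ i, 0 ≤ b i) ∧
      r = ∑ i, b i • ray i := by
  by_cases hr0 : r = 0
  · exact ⟨0, Fin.elim0, Fin.elim0, fun i => i.elim0, fun i => i.elim0, by simp [hr0]⟩
  have hγ : 0 < cvec M ⬝ᵥ r := cvec_pos M d hne hline hr hr0
  set γ := cvec M ⬝ᵥ r with hγdef
  set q := γ⁻¹ • r with hq
  have hqQ : Mq M *ᵥ q ≤ dq m := by
    rw [mem_Q_iff]
    constructor
    · intro j
      rw [hq, Matrix.mulVec_smul]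
      have := hr j
      simp only [Pi.smul_apply, Pi.zero_apply, smul_eq_mul] at *
      exact mul_nonpos_of_nonneg_of_nonpos (inv_nonneg.mpr hγ.le) this
    · rw [hq, dotProduct_smul, ← hγdef, smul_eq_mul, inv_mul_cancel₀ (ne_of_gt hγ)]
  obtain ⟨N, pt, a, r₀, hept, ha, hs, hr₀le, hdec⟩ :=
    step1 (Mq M) (dq m) (Qline M d hne hline) (Module.finrank ℝ (Fsp (Mq M) (dq m) q)) q hqQ
      le_rfl
  have hr₀ : r₀ = 0 := by
    by_contra hr₀ne
    have h1 := hr₀le ((Fin.last m).castSucc)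
    have h2 := hr₀le (Fin.last (m + 1))
    rw [Mq_mulVec_c] at h1
    rw [Mq_mulVec_negc] at h2
    simp only [Pi.zero_apply] at h1 h2
    have hMr₀ : M *ᵥ r₀ ≤ 0 := by
      intro j
      have := hr₀le (j.castSucc.castSucc)
      rw [Mq_mulVec_castSucc] at this
      simpa using this
    have := cvec_pos M d hne hline hMr₀ hr₀ne
    linarith
  rw [hr₀, add_zero] at hdec
  refine ⟨N, pt, fun i => γ * a i, ?_, ?_, ?_⟩
  · intro i
    exact extremeRay_of_Q M d hne hline (hept i)
  · intro i
    exact mul_nonneg hγ.le (ha i)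
  · have : r = γ • q := by rw [hq, smul_inv_smul₀ (ne_of_gt hγ)]
    rw [this, hdec, Finset.smul_sum]
    exact Finset.sum_congr rfl fun i _ => (smul_smul _ _ _)

/-- **Minkowski resolution theorem.** Every point of a nonempty polyhedron
`P = {u : M u ≤ d}` containing no line can be written as a convex combination of the
extreme points of `P` plus a conic (nonnegative) combination of extreme rays of `P`. -/
theorem minkowski_resolution {n m : ℕ}
    (M : Matrix (Fin m) (Fin n) ℝ) (d : Fin m → ℝ)
    (P : Set (Fin n → ℝ)) (hP : P = {u | M *ᵥ u ≤ d})
    (hne : P.Nonempty)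
    (hline : ¬ ∃ (u v : Fin n → ℝ), v ≠ 0 ∧ ∀ t : ℝ, u + t • v ∈ P) :
    ∀ u ∈ P, ∃ (n₁ n₂ : ℕ) (pt : Fin n₁ → Fin n → ℝ) (ray : Fin n₂ → Fin n → ℝ)
      (a : Fin n₁ → ℝ) (b : Fin n₂ → ℝ),
      (∀ i, pt i ∈ Set.extremePoints ℝ P) ∧
      (∀ i, IsExtremeRay P (ray i)) ∧
      (∀ i, 0 ≤ a i) ∧ (∑ i, a i) = 1 ∧ (∀ i, 0 ≤ b i) ∧
      u = ∑ i, a i • pt i + ∑ i, b i • ray i := by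
  subst hP
  intro u hu
  have hne' : ∃ u₀, M *ᵥ u₀ ≤ d := hne
  have hline' : ¬ ∃ (u v : Fin n → ℝ), v ≠ 0 ∧ ∀ t : ℝ, M *ᵥ (u + t • v) ≤ d := by
    rintro ⟨a, v, h1, h2⟩
    exact hline ⟨a, v, h1, fun t => h2 t⟩
  obtain ⟨N, pt, a, r, hept, ha, hs, hrle, hdec⟩ :=
    step1 M d hline' (Module.finrank ℝ (Fsp M d u)) u hu le_rfl
  obtain ⟨N₂, ray, b, hray, hb, hr⟩ := step2 M d hne' hline' hrle
  exact ⟨N, N₂, pt, ray, a, b, hept, hray, ha, hs, hb, by rw [hdec, hr]⟩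
end

section
/- Finite termination certificate of Benders decomposition: if at some iteration the master optimal solution (x*, z*) is such that for every s the dual subproblem is bounded with optimal value p_s*ᵀ(h_s − T_s x*) ≤ z*_s, and strong duality holds for each subproblem, then cᵀx* + Σ_s Q_s(x*) equals the master optimal value, and x* together with optimal subproblem solutions is optimal for the full problem. -/
/-!
By weak duality every feasible point of the full problem satisfies the valid cuts with
`z s = q s ⬝ᵥ y s`, so the master is a relaxation: master value ≤ full value. Completing
`xstar` by near-optimal second-stage solutions gives full value ≤ `cᵀxstar + Σ_s Q_s(xstar)`,
and strong duality with the stopping test bounds this by `cᵀxstar + Σ_s zstar s`, the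
master value. The chain therefore closes into equalities.
-/

open Matrix
open scoped BigOperators

/-- Optimal value of the Benders master problem with given cut collections. -/
noncomputable def bendersMasterVal {m p k : ℕ} {S : Type*} [Fintype S]
    (A : Matrix (Fin p) (Fin k) ℝ) (b : Fin p → ℝ) (c : Fin k → ℝ)
    (T : S → Matrix (Fin m) (Fin k) ℝ) (h : S → Fin m → ℝ)
    (optCuts feasCuts : List (S × (Fin m → ℝ))) : EReal :=
  sInf {v : EReal | ∃ (x : Fin k → ℝ) (z : S → ℝ),
    A *ᵥ x = b ∧ 0 ≤ x ∧
    (∀ cut ∈ optCuts, cut.2 ⬝ᵥ (h cut.1 - T cut.1 *ᵥ x) ≤ z cut.1) ∧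
    (∀ cut ∈ feasCuts, cut.2 ⬝ᵥ (h cut.1 - T cut.1 *ᵥ x) ≤ 0) ∧
    v = ((c ⬝ᵥ x + ∑ s, z s : ℝ) : EReal)}

/-- Optimal value of the full problem. -/
noncomputable def bendersFullVal {m n p k : ℕ} {S : Type*} [Fintype S]
    (A : Matrix (Fin p) (Fin k) ℝ) (b : Fin p → ℝ) (c : Fin k → ℝ)
    (T : S → Matrix (Fin m) (Fin k) ℝ) (W : S → Matrix (Fin m) (Fin n) ℝ)
    (h : S → Fin m → ℝ) (q : S → Fin n → ℝ) : EReal :=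
  sInf {v : EReal | ∃ (x : Fin k → ℝ) (y : S → Fin n → ℝ),
    A *ᵥ x = b ∧ 0 ≤ x ∧
    (∀ s, T s *ᵥ x + W s *ᵥ y s = h s ∧ 0 ≤ y s) ∧
    v = ((c ⬝ᵥ x + ∑ s, q s ⬝ᵥ y s : ℝ) : EReal)}

theorem dotProduct_mulVec_le_of_vecMul_le {R : Type*} [CommRing R] [PartialOrder R]
    [IsOrderedRing R] {l o : Type*} [Fintype l] [Fintype o] {M : Matrix l o R}
    {u : l → R} {q y : o → R} (hu : u ᵥ* M ≤ q) (hy : 0 ≤ y) :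
    u ⬝ᵥ (M *ᵥ y) ≤ q ⬝ᵥ y := by
  rw [dotProduct_mulVec]
  exact dotProduct_le_dotProduct_of_nonneg_right hu hy

theorem exists_lt_of_sInf_eq_coe {α : Type*} {P : α → Prop} {f : α → ℝ} {Q t : ℝ}
    (hQ : sInf {v : EReal | ∃ a, P a ∧ v = (f a : EReal)} = (Q : EReal)) (ht : Q < t) :
    ∃ a, P a ∧ f a < t := by
  have hlt : sInf {v : EReal | ∃ a, P a ∧ v = (f a : EReal)} < (t : EReal) := by
    rwa [hQ, EReal.coe_lt_coe_iff]
  obtain ⟨_, ⟨a, ha, rfl⟩, hat⟩ := sInf_lt_iff.mp hlt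
  exact ⟨a, ha, EReal.coe_lt_coe_iff.mp hat⟩

theorem exists_sum_lt_of_forall_exists_lt {𝕜 : Type*} [Field 𝕜] [LinearOrder 𝕜]
    [IsStrictOrderedRing 𝕜] {S : Type*} [Fintype S] {α : S → Type*} {f : ∀ s, α s → 𝕜}
    {Q : S → 𝕜} (hf : ∀ s t, Q s < t → ∃ a, f s a < t) {w : 𝕜} (hw : ∑ s, Q s < w) :
    ∃ a : ∀ s, α s, ∑ s, f s (a s) < w := by
  -- spread the slack `w - ∑ Q` evenly, with one share to spare for strictness
  set ε := (w - ∑ s, Q s) / (Fintype.card S + 1)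
  have hε : 0 < ε := div_pos (sub_pos.mpr hw) (by positivity)
  choose a ha using fun s => hf s (Q s + ε) (lt_add_of_pos_right _ hε)
  refine ⟨a, ?_⟩
  have hslack : (Fintype.card S + 1) * ε = w - ∑ s, Q s :=
    mul_div_cancel₀ _ (by positivity)
  calc ∑ s, f s (a s) ≤ ∑ s, (Q s + ε) := Finset.sum_le_sum fun s _ => (ha s).le
    _ = ∑ s, Q s + Fintype.card S * ε := by
      rw [Finset.sum_add_distrib, Finset.sum_const, Finset.card_univ, nsmul_eq_mul]
    _ < w := by linarith

section Benders

variable {m n p k : ℕ} {S : Type*} [Fintype S]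
  (A : Matrix (Fin p) (Fin k) ℝ) (b : Fin p → ℝ) (c : Fin k → ℝ)
  (T : S → Matrix (Fin m) (Fin k) ℝ) (W : S → Matrix (Fin m) (Fin n) ℝ)
  (h : S → Fin m → ℝ) (q : S → Fin n → ℝ)

theorem bendersMasterVal_le_bendersFullVal (optCuts feasCuts : List (S × (Fin m → ℝ)))
    (hopt : ∀ cut ∈ optCuts, cut.2 ᵥ* W cut.1 ≤ q cut.1)
    (hfeas : ∀ cut ∈ feasCuts, cut.2 ᵥ* W cut.1 ≤ 0) :
    bendersMasterVal A b c T h optCuts feasCuts ≤ bendersFullVal A b c T W h q := by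
  refine le_sInf ?_
  rintro _ ⟨x, y, hA, hx, hy, rfl⟩
  have hWy : ∀ s, h s - T s *ᵥ x = W s *ᵥ y s := fun s => by
    rw [sub_eq_iff_eq_add', (hy s).1]
  refine sInf_le
    ⟨x, fun s => q s ⬝ᵥ y s, hA, hx, fun cut hcut => ?_, fun cut hcut => ?_, rfl⟩
  · rw [hWy]
    exact dotProduct_mulVec_le_of_vecMul_le (hopt cut hcut) (hy cut.1).2
  · rw [hWy, ← zero_dotProduct (y cut.1)]
    exact dotProduct_mulVec_le_of_vecMul_le (hfeas cut hcut) (hy cut.1).2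

theorem bendersFullVal_le_of_sInf_eq {x : Fin k → ℝ} (hxA : A *ᵥ x = b) (hx : 0 ≤ x)
    (Qval : S → ℝ)
    (hQ : ∀ s, sInf {v : EReal | ∃ y : Fin n → ℝ,
        W s *ᵥ y = h s - T s *ᵥ x ∧ 0 ≤ y ∧ v = ((q s ⬝ᵥ y : ℝ) : EReal)}
        = ((Qval s : ℝ) : EReal)) :
    bendersFullVal A b c T W h q ≤ ((c ⬝ᵥ x + ∑ s, Qval s : ℝ) : EReal) := by
  refine EReal.le_of_forall_lt_iff_le.mp fun w hw => ?_
  have hsum : ∑ s, Qval s < w - c ⬝ᵥ x := by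
    rw [EReal.coe_lt_coe_iff] at hw
    linarith
  obtain ⟨y, hy⟩ := exists_sum_lt_of_forall_exists_lt
    (f := fun s (y : {y // W s *ᵥ y = h s - T s *ᵥ x ∧ 0 ≤ y}) => q s ⬝ᵥ y.1)
    (fun s t ht => by
      obtain ⟨y, hy, hyt⟩ := exists_lt_of_sInf_eq_coe
        (P := fun y => W s *ᵥ y = h s - T s *ᵥ x ∧ 0 ≤ y)
        (by simpa only [and_assoc] using hQ s) ht
      exact ⟨⟨y, hy⟩, hyt⟩)
    hsum
  have hfeasible : ∀ s, T s *ᵥ x + W s *ᵥ (y s).1 = h s ∧ 0 ≤ (y s).1 := fun s =>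
    ⟨by rw [(y s).2.1, add_sub_cancel], (y s).2.2⟩
  calc bendersFullVal A b c T W h q ≤ ((c ⬝ᵥ x + ∑ s, q s ⬝ᵥ (y s).1 : ℝ) : EReal) :=
        sInf_le ⟨x, fun s => (y s).1, hxA, hx, hfeasible, rfl⟩
    _ ≤ w := EReal.coe_le_coe_iff.mpr (by linarith)

end Benders

theorem benders_termination_general {m n p k : ℕ} {S : Type*} [Fintype S]
    (A : Matrix (Fin p) (Fin k) ℝ) (b : Fin p → ℝ) (c : Fin k → ℝ)
    (T : S → Matrix (Fin m) (Fin k) ℝ) (W : S → Matrix (Fin m) (Fin n) ℝ)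
    (h : S → Fin m → ℝ) (q : S → Fin n → ℝ)
    (optCuts feasCuts : List (S × (Fin m → ℝ)))
    (hopt : ∀ cut ∈ optCuts, cut.2 ᵥ* W cut.1 ≤ q cut.1)
    (hfeas : ∀ cut ∈ feasCuts, cut.2 ᵥ* W cut.1 ≤ 0)
    (xstar : Fin k → ℝ) (zstar : S → ℝ)
    (hxA : A *ᵥ xstar = b) (hxpos : 0 ≤ xstar)
    (hattain : bendersMasterVal A b c T h optCuts feasCuts
        = ((c ⬝ᵥ xstar + ∑ s, zstar s : ℝ) : EReal))
    (ps : S → Fin m → ℝ)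
    (Qval : S → ℝ)
    (hQ : ∀ s, sInf {v : EReal | ∃ y : Fin n → ℝ,
        W s *ᵥ y = h s - T s *ᵥ xstar ∧ 0 ≤ y ∧ v = ((q s ⬝ᵥ y : ℝ) : EReal)}
        = ((Qval s : ℝ) : EReal))
    (hsd : ∀ s, Qval s = ps s ⬝ᵥ (h s - T s *ᵥ xstar))
    (hstop : ∀ s, ps s ⬝ᵥ (h s - T s *ᵥ xstar) ≤ zstar s) :
    bendersFullVal A b c T W h q = ((c ⬝ᵥ xstar + ∑ s, Qval s : ℝ) : EReal) ∧
    bendersMasterVal A b c T h optCuts feasCuts = bendersFullVal A b c T W h q := by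
  have hrelax := bendersMasterVal_le_bendersFullVal A b c T W h q optCuts feasCuts hopt hfeas
  have hupper := bendersFullVal_le_of_sInf_eq A b c T W h q hxA hxpos Qval hQ
  have hlower : ((c ⬝ᵥ xstar + ∑ s, Qval s : ℝ) : EReal) ≤
      bendersMasterVal A b c T h optCuts feasCuts := by
    rw [hattain, EReal.coe_le_coe_iff]
    gcongr with s
    exact (hsd s).trans_le (hstop s)
  have hfull := le_antisymm hupper (hlower.trans hrelax)
  exact ⟨hfull, le_antisymm hrelax (hfull ▸ hlower)⟩

/-- **Finite termination certificate of Benders decomposition.** Suppose the cuts of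
the master are valid (optimality cuts dual-feasible, feasibility cuts dual rays), the
master optimum is attained at `(xstar, zstar)`, and for every `s` the dual subproblem
is bounded with optimal value `ps s ⬝ᵥ (h s − T s xstar) ≤ zstar s` while strong
duality holds for each subproblem (`Q_s(xstar) = Qval s = ps s ⬝ᵥ (h s − T s xstar)`).
Then `cᵀxstar + Σ_s Q_s(xstar)` equals the master optimal value and `xstar` (with
optimal subproblem solutions) is optimal for the full problem. -/
theorem benders_termination {m n p k : ℕ} {S : Type*} [Fintype S]
    (A : Matrix (Fin p) (Fin k) ℝ) (b : Fin p → ℝ) (c : Fin k → ℝ)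
    (T : S → Matrix (Fin m) (Fin k) ℝ) (W : S → Matrix (Fin m) (Fin n) ℝ)
    (h : S → Fin m → ℝ) (q : S → Fin n → ℝ)
    (optCuts feasCuts : List (S × (Fin m → ℝ)))
    (hopt : ∀ cut ∈ optCuts, cut.2 ᵥ* W cut.1 ≤ q cut.1)
    (hfeas : ∀ cut ∈ feasCuts, cut.2 ᵥ* W cut.1 ≤ 0)
    (xstar : Fin k → ℝ) (zstar : S → ℝ)
    (hxA : A *ᵥ xstar = b) (hxpos : 0 ≤ xstar)
    (hcutO : ∀ cut ∈ optCuts, cut.2 ⬝ᵥ (h cut.1 - T cut.1 *ᵥ xstar) ≤ zstar cut.1)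
    (hcutF : ∀ cut ∈ feasCuts, cut.2 ⬝ᵥ (h cut.1 - T cut.1 *ᵥ xstar) ≤ 0)
    (hattain : bendersMasterVal A b c T h optCuts feasCuts
        = ((c ⬝ᵥ xstar + ∑ s, zstar s : ℝ) : EReal))
    (ps : S → Fin m → ℝ) (hps : ∀ s, ps s ᵥ* W s ≤ q s)
    (Qval : S → ℝ)
    (hQ : ∀ s, sInf {v : EReal | ∃ y : Fin n → ℝ,
        W s *ᵥ y = h s - T s *ᵥ xstar ∧ 0 ≤ y ∧ v = ((q s ⬝ᵥ y : ℝ) : EReal)}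
        = ((Qval s : ℝ) : EReal))
    (hsd : ∀ s, Qval s = ps s ⬝ᵥ (h s - T s *ᵥ xstar))
    (hstop : ∀ s, ps s ⬝ᵥ (h s - T s *ᵥ xstar) ≤ zstar s) :
    bendersFullVal A b c T W h q = ((c ⬝ᵥ xstar + ∑ s, Qval s : ℝ) : EReal) ∧
    bendersMasterVal A b c T h optCuts feasCuts = bendersFullVal A b c T W h q :=
  benders_termination_general A b c T W h q optCuts feasCuts hopt hfeas xstar zstar hxA hxpos
    hattain ps Qval hQ hsd hstop
end
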